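/- Let k ≥ 2, γ > 0, x ∈ ℝ^k, y ∈ ℝ, a₀ > 1/2, b₀ > 0, and let X = xᵀ (a 1×k matrix). Then the full-model posterior loss L_full = (b₀ + (y²/2)(1 − X(XᵀX + γ k I_k)⁻¹Xᵀ))/(a₀ − 1/2) · (1 + tr((XᵀX + γ k I_k)⁻¹)) is at least the best single-covariate loss min_j (b₀ + (γ y²)/(2(x_j² + γ)))/(a₀ − 1/2) · (1 + 1/(x_j² + γ)). -/

import Mathlib

/-!
Both matrix quantities are explicit by Sherman–Morrison: with `s = ‖x‖²` and `c = γk`,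
`(xxᵀ + cI)⁻¹ = c⁻¹(I - xxᵀ/(s + c))`, so the full-model loss is a function of the mean square
`s/k` alone. Its first factor coincides with that of a single covariate with `x_j² = s/k`, and its
trace term dominates the corresponding `1/(s/k + γ)`. Since the single-covariate loss decreases in
`x_j²`, any covariate with `x_j² ≥ s/k` does at least as well.
-/

open Matrix

namespace Matrix

variable {n 𝕜 : Type*} [Fintype n] [DecidableEq n] [Field 𝕜]

theorem inv_vecMulVec_add_smul_one (u v : n → 𝕜) {c : 𝕜} (hc : c ≠ 0)
    (hd : v ⬝ᵥ u + c ≠ 0) :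
    (vecMulVec u v + c • 1)⁻¹ = c⁻¹ • (1 - (v ⬝ᵥ u + c)⁻¹ • vecMulVec u v) := by
  refine inv_eq_right_inv ?_
  simp only [Matrix.mul_smul, Matrix.mul_sub, Matrix.add_mul, Matrix.smul_mul, Matrix.mul_one,
    Matrix.one_mul, vecMulVec_mul_vecMulVec, vecMulVec_smul]
  rw [← add_smul, smul_smul, inv_mul_cancel₀ hd, one_smul, add_sub_cancel_left, smul_smul,
    inv_mul_cancel₀ hc, one_smul]

theorem vecMul_inv_vecMulVec_add_smul_one_dotProduct (u v : n → 𝕜) {c : 𝕜} (hc : c ≠ 0)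
    (hd : v ⬝ᵥ u + c ≠ 0) :
    (v ᵥ* (vecMulVec u v + c • 1)⁻¹) ⬝ᵥ u = v ⬝ᵥ u / (v ⬝ᵥ u + c) := by
  rw [inv_vecMulVec_add_smul_one u v hc hd]
  simp only [vecMul_smul, vecMul_sub, vecMul_one, vecMul_vecMulVec, smul_dotProduct,
    sub_dotProduct, smul_eq_mul]
  field_simp
  ring

theorem trace_inv_vecMulVec_add_smul_one (u v : n → 𝕜) {c : 𝕜} (hc : c ≠ 0)
    (hd : v ⬝ᵥ u + c ≠ 0) :
    trace (vecMulVec u v + c • 1)⁻¹ = c⁻¹ * (Fintype.card n - v ⬝ᵥ u / (v ⬝ᵥ u + c)) := by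
  rw [inv_vecMulVec_add_smul_one u v hc hd, trace_smul, trace_sub, trace_one, trace_smul,
    trace_vecMulVec, dotProduct_comm, smul_eq_mul, smul_eq_mul, div_eq_inv_mul]

end Matrix

/-- The posterior loss of the model using only a covariate `x_j` with `x_j² = v`. -/
noncomputable def singleCovariateLoss (γ a₀ b₀ y v : ℝ) : ℝ :=
  (b₀ + γ * y ^ 2 / (2 * (v + γ))) / (a₀ - 1 / 2) * (1 + 1 / (v + γ))

theorem singleCovariateLoss_anti {γ a₀ b₀ y v w : ℝ} (hγ : 0 < γ) (ha : 1 / 2 < a₀)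
    (hb : 0 ≤ b₀) (hv : 0 ≤ v) (hvw : v ≤ w) :
    singleCovariateLoss γ a₀ b₀ y w ≤ singleCovariateLoss γ a₀ b₀ y v := by
  have : 0 < a₀ - 1 / 2 := by linarith
  have : 0 ≤ w := hv.trans hvw
  unfold singleCovariateLoss
  gcongr

/-- The right-hand side equals `((k - 1)/γ + 1/(s/k + γ))/k`, an average of `k` terms each at
least `1/(s/k + γ)`. -/
theorem one_div_div_add_le_inv_mul_sub_div {k s γ : ℝ} (hk : 1 ≤ k) (hs : 0 ≤ s) (hγ : 0 < γ) :
    1 / (s / k + γ) ≤ (γ * k)⁻¹ * (k - s / (s + γ * k)) := by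
  have : 0 < k := by linarith
  rw [div_le_iff₀ (by positivity)]
  field_simp
  nlinarith [mul_nonneg (sub_nonneg.2 hk) hs]

/-- Single observation (`n = 1`): the full-model posterior loss
`(b₀ + (y²/2)(1 − X(XᵀX + γk I_k)⁻¹Xᵀ))/(a₀ − 1/2) · (1 + tr((XᵀX + γk I_k)⁻¹))`
is at least the best single-covariate posterior loss
`min_j (b₀ + γy²/(2(x_j² + γ)))/(a₀ − 1/2) · (1 + 1/(x_j² + γ))`. -/
theorem stmt_18 {k : ℕ} (hk : 2 ≤ k) (γ a₀ b₀ y : ℝ)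
    (hγ : 0 < γ) (ha : 1 / 2 < a₀) (hb : 0 < b₀)
    (x : Fin k → ℝ) (X : Matrix (Fin 1) (Fin k) ℝ)
    (hX : X = Matrix.of fun _ i => x i) :
    ∃ j : Fin k,
      (b₀ + γ * y ^ 2 / (2 * ((x j) ^ 2 + γ))) / (a₀ - 1 / 2) *
          (1 + 1 / ((x j) ^ 2 + γ)) ≤
        (b₀ + y ^ 2 / 2 *
            (1 - (X * (Xᵀ * X + (γ * (k : ℝ)) • (1 : Matrix (Fin k) (Fin k) ℝ))⁻¹ * Xᵀ) 0 0)) /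
            (a₀ - 1 / 2) *
          (1 + Matrix.trace (Xᵀ * X + (γ * (k : ℝ)) • (1 : Matrix (Fin k) (Fin k) ℝ))⁻¹) := by
  replace hX : X = replicateRow (Fin 1) x := hX
  have hgram : Xᵀ * X = vecMulVec x x := by
    rw [hX, transpose_replicateRow]
    exact (vecMulVec_eq (Fin 1) x x).symm
  have hquad (M : Matrix (Fin k) (Fin k) ℝ) : (X * M * Xᵀ) 0 0 = (x ᵥ* M) ⬝ᵥ x := by
    rw [hX, transpose_replicateRow, ← replicateRow_vecMul]
    rfl
  have hk1 : (1 : ℝ) ≤ k := by exact_mod_cast (by omega : 1 ≤ k)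
  have hk0 : (0 : ℝ) < k := by linarith
  set s := x ⬝ᵥ x with hs
  have hs0 : 0 ≤ s := Finset.sum_nonneg fun i _ => mul_self_nonneg (x i)
  have hc : γ * k ≠ 0 := by positivity
  have hd : s + γ * k ≠ 0 := by positivity
  obtain ⟨j, -, hj⟩ : ∃ j ∈ Finset.univ, s / k ≤ x j ^ 2 := by
    refine Finset.exists_le_of_sum_le ⟨⟨0, by omega⟩, Finset.mem_univ _⟩ (le_of_eq ?_)
    rw [Finset.sum_const, Finset.card_univ, Fintype.card_fin, nsmul_eq_mul,
      mul_div_cancel₀ _ hk0.ne']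
    simp only [hs, dotProduct, sq]
  have hfirst : y ^ 2 / 2 * (1 - s / (s + γ * k)) = γ * y ^ 2 / (2 * (s / k + γ)) := by
    field_simp
    ring
  have : 0 < a₀ - 1 / 2 := by linarith
  refine ⟨j, ?_⟩
  rw [hgram, hquad, vecMul_inv_vecMulVec_add_smul_one_dotProduct x x hc hd,
    trace_inv_vecMulVec_add_smul_one x x hc hd, Fintype.card_fin, ← hs, hfirst]
  calc singleCovariateLoss γ a₀ b₀ y (x j ^ 2)
      ≤ singleCovariateLoss γ a₀ b₀ y (s / k) :=
        singleCovariateLoss_anti hγ ha hb.le (by positivity) hj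
    _ ≤ _ := by
      unfold singleCovariateLoss
      gcongr _ * (1 + ?_)
      exact one_div_div_add_le_inv_mul_sub_div hk1 hs0 hγ
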